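/- Let (S,*) be an adequate partial semigroup and let A ⊆ S be piecewise syndetic. Then there exists a finite nonempty set H ⊆ S such that for every finite nonempty set T ⊆ σ(H), there exists x ∈ σ(T) such that T*x ⊆ ⋃_{t∈H} t⁻¹A. -/
import Mathlib


/-- A partial semigroup: `mul` is partially defined (`none` = undefined), and
associativity holds in the strong sense: either side is defined iff the other is,
and then they agree. -/
structure PartialSemigroup (S : Type*) where
  mul : S → S → Option S
  assoc : ∀ a b c : S,
    (mul a b).bind (fun x => mul x c) = (mul b c).bind (fun y => mul a y)

namespace PartialSemigroup

variable {S : Type*} (P : PartialSemigroup S)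

/-- φ(a) = {t : a*t is defined}. -/
def phi (a : S) : Set S := {t | (P.mul a t).isSome}

/-- σ(H) = ⋂_{s ∈ H} φ(s). -/
def sigma (H : Set S) : Set S := ⋂ s ∈ H, P.phi s

/-- a⁻¹A = {t ∈ φ(a) : a*t ∈ A}. -/
def invImg (a : S) (A : Set S) : Set S :=
  {t | ∃ v, P.mul a t = some v ∧ v ∈ A}

/-- An adequate partial semigroup: σ(H) ≠ ∅ for every finite nonempty H. -/
def Adequate : Prop :=
  ∀ H : Finset S, H.Nonempty → (P.sigma ↑H).Nonempty

/-- δS: ultrafilters containing every φ(x). -/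
def mem_delta (q : Ultrafilter S) : Prop := ∀ x : S, P.phi x ∈ q

/-- Product of a nonempty list, associated to the left; `none` if empty or undefined. -/
def listProd : List S → Option S
  | [] => none
  | a :: l => l.foldl (fun acc b => acc.bind (fun x => P.mul x b)) (some a)

/-- ∏_{t ∈ H} f(t) in increasing order of indices. -/
def finProd (f : ℕ → S) (H : Finset ℕ) : Option S :=
  P.listProd ((H.sort (· ≤ ·)).map f)

/-- Product of a list of partially defined elements. -/
def optProd : List (Option S) → Option S
  | [] => none
  | o :: l => l.foldl (fun acc b => acc.bind (fun x => b.bind (fun y => P.mul x y))) o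

/-- An adequate sequence. -/
def AdequateSeq (f : ℕ → S) : Prop :=
  (∀ H : Finset ℕ, H.Nonempty → (P.finProd f H).isSome) ∧
  (∀ F : Finset S, F.Nonempty → ∃ m : ℕ,
    ∀ H : Finset ℕ, H.Nonempty → (∀ n ∈ H, m ≤ n) →
      ∀ v, P.finProd f H = some v → v ∈ P.sigma ↑F)

/-- The interleaved product (∏_{i=1}^m a(i)*f(t(i)))*a(m+1). -/
def jProd {m : ℕ} (a : Fin (m + 1) → S) (t : Fin m → ℕ) (f : ℕ → S) : Option S :=
  P.listProd
    ((((List.finRange m).map (fun i => [a i.castSucc, f (t i)])).flatten) ++ [a (Fin.last m)])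

/-- J-sets. -/
def IsJSet (A : Set S) : Prop :=
  ∀ F : Finset (ℕ → S), F.Nonempty → (∀ f ∈ F, P.AdequateSeq f) →
    ∀ L : Finset S, L.Nonempty →
      ∃ m : ℕ, 0 < m ∧ ∃ a : Fin (m + 1) → S, ∃ t : Fin m → ℕ, StrictMono t ∧
        ∀ f ∈ F, ∃ v, P.jProd a t f = some v ∧ v ∈ A ∩ P.sigma ↑L

end PartialSemigroup

namespace PartialSemigroup
variable {S : Type*} (P : PartialSemigroup S)

/-- A syndetic subset of a partial semigroup. -/
def Syndetic (A : Set S) : Prop :=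
  ∃ H : Finset S, H.Nonempty ∧ P.sigma ↑H ⊆ ⋃ t ∈ H, P.invImg t A

end PartialSemigroup

namespace PartialSemigroup
variable {S : Type*} (P : PartialSemigroup S)

/-- `I` is a (two-sided) ideal of `δS` (with respect to the operation `star`). -/
def IsIdeal (star : {q : Ultrafilter S // P.mem_delta q} → {q : Ultrafilter S // P.mem_delta q} →
      {q : Ultrafilter S // P.mem_delta q})
    (I : Set {q : Ultrafilter S // P.mem_delta q}) : Prop :=
  I.Nonempty ∧ ∀ p ∈ I, ∀ q, star p q ∈ I ∧ star q p ∈ I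

/-- `K` is the smallest (two-sided) ideal of `δS`. -/
def IsSmallestIdeal (star : {q : Ultrafilter S // P.mem_delta q} →
      {q : Ultrafilter S // P.mem_delta q} → {q : Ultrafilter S // P.mem_delta q})
    (K : Set {q : Ultrafilter S // P.mem_delta q}) : Prop :=
  P.IsIdeal star K ∧ ∀ I, P.IsIdeal star I → K ⊆ I

end PartialSemigroup

section StmtTenAux

open PartialSemigroup

variable {S : Type*}

/-- δS as a type. -/
private abbrev Delta (P : PartialSemigroup S) : Type _ := {q : Ultrafilter S // P.mem_delta q}

private theorem invImg_invImg' (P : PartialSemigroup S) {x b w : S} (h : P.mul x b = some w)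
    (A : Set S) : P.invImg b (P.invImg x A) = P.invImg w A := by
  ext c
  have hassoc := P.assoc x b c
  rw [h] at hassoc
  simp only [Option.bind_some] at hassoc
  -- hassoc : P.mul w c = (P.mul b c).bind fun y => P.mul x y
  simp only [invImg, Set.mem_setOf_eq]
  constructor
  · rintro ⟨z, hz, v, hv, hvA⟩
    refine ⟨v, ?_, hvA⟩
    rw [hassoc, hz]
    simpa using hv
  · rintro ⟨v, hv, hvA⟩
    rw [hassoc] at hv
    cases hbc : P.mul b c with
    | none => rw [hbc] at hv; simp at hv
    | some z =>
      rw [hbc] at hv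
      simp only [Option.bind_some] at hv
      exact ⟨z, rfl, v, hv, hvA⟩

variable {P : PartialSemigroup S} {star : Delta P → Delta P → Delta P}

private theorem star_assoc'
    (hstar : ∀ p q (A : Set S), A ∈ (star p q).1 ↔ {a : S | P.invImg a A ∈ q.1} ∈ p.1)
    (p w r : Delta P) : star (star p w) r = star p (star w r) := by
  apply Subtype.ext
  apply Ultrafilter.coe_injective
  apply Filter.ext
  intro A
  simp only [Ultrafilter.mem_coe, hstar]
  suffices h : {x : S | P.invImg x {a | P.invImg a A ∈ r.1} ∈ w.1}
      = {x : S | {b | P.invImg b (P.invImg x A) ∈ r.1} ∈ w.1} by rw [h]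
  ext x
  simp only [Set.mem_setOf_eq]
  have hphi : P.phi x ∈ w.1 := w.2 x
  have hkey : P.invImg x {a | P.invImg a A ∈ r.1} ∩ P.phi x
      = {b | P.invImg b (P.invImg x A) ∈ r.1} ∩ P.phi x := by
    ext b
    simp only [Set.mem_inter_iff, and_congr_left_iff]
    intro hb
    have hb' : (P.mul x b).isSome := hb
    obtain ⟨v, hv⟩ := Option.isSome_iff_exists.mp hb'
    constructor
    · rintro ⟨v', hv', h'⟩
      rw [hv] at hv'
      obtain rfl := Option.some.inj hv'
      show P.invImg b (P.invImg x A) ∈ r.1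
      rw [invImg_invImg' P hv A]
      exact h'
    · intro h'
      refine ⟨v, hv, ?_⟩
      show P.invImg v A ∈ r.1
      rw [← invImg_invImg' P hv A]
      exact h'
  constructor
  · intro h'
    have h2 := Filter.inter_mem h' hphi
    rw [hkey] at h2
    exact Filter.mem_of_superset h2 Set.inter_subset_left
  · intro h'
    have h2 := Filter.inter_mem h' hphi
    rw [← hkey] at h2
    exact Filter.mem_of_superset h2 Set.inter_subset_left

/-- A (strongly) minimal left ideal of `δS`. -/
private def MinL (star : Delta P → Delta P → Delta P) (L : Set (Delta P)) : Prop :=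
  L.Nonempty ∧ (∀ u : Delta P, ∀ m ∈ L, star u m ∈ L) ∧
    ∀ m ∈ L, L ⊆ Set.range fun u => star u m

private theorem exists_repro
    (hstar : ∀ p q (A : Set S), A ∈ (star p q).1 ↔ {a : S | P.invImg a A ∈ q.1} ∈ p.1)
    (K : Set (Delta P)) (hK : P.IsSmallestIdeal star K)
    (q : Delta P) (hqK : q ∈ K) (w : Delta P) :
    ∃ u : Delta P, q = star u (star w q) := by
  classical
  haveI : Nonempty (Delta P) := ⟨q⟩
  -- δS is a closed subset of the compact space of ultrafilters
  have hδclosed : IsClosed {u : Ultrafilter S | P.mem_delta u} := by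
    have h : {u : Ultrafilter S | P.mem_delta u}
        = ⋂ x : S, {u : Ultrafilter S | P.phi x ∈ u} := by
      ext u
      simp only [Set.mem_iInter, Set.mem_setOf_eq]
      exact Iff.rfl
    rw [h]
    exact isClosed_iInter fun x => ultrafilter_isClosed_basic _
  haveI : CompactSpace (Delta P) := isCompact_iff_compactSpace.mp hδclosed.isCompact
  -- right translations are continuous
  have contR : ∀ v : Delta P, Continuous fun u : Delta P => star u v := by
    intro v
    have hval : Continuous fun u : Delta P => (star u v).1 := by
      rw [ultrafilterBasis_is_basis.continuous_iff]
      rintro _ ⟨s, rfl⟩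
      have heq : ((fun u : Delta P => (star u v).1) ⁻¹' {u : Ultrafilter S | s ∈ u})
          = Subtype.val ⁻¹' {u : Ultrafilter S | {a | P.invImg a s ∈ v.1} ∈ u} := by
        ext u
        simp only [Set.mem_preimage, Set.mem_setOf_eq]
        exact hstar u v s
      rw [heq]
      exact (ultrafilter_isOpen_basic _).preimage continuous_subtype_val
    exact hval.subtype_mk _
  -- Zorn: a minimal nonempty closed left ideal exists
  set C : Set (Set (Delta P)) :=
    {M | M.Nonempty ∧ IsClosed M ∧ ∀ u : Delta P, ∀ m ∈ M, star u m ∈ M} with hCdef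
  have hchain : ∀ c ⊆ C, IsChain (· ⊆ ·) c → c.Nonempty → ∃ lb ∈ C, ∀ s ∈ c, lb ⊆ s := by
    intro c hcC hch hcne
    haveI : Nonempty c := hcne.to_subtype
    have hdir : DirectedOn (· ⊇ ·) c := by
      intro x hx y hy
      rcases hch.total hx hy with h | h
      · exact ⟨x, hx, Set.Subset.rfl, h⟩
      · exact ⟨y, hy, h, Set.Subset.rfl⟩
    have hne : (⋂₀ c).Nonempty := by
      apply IsCompact.nonempty_sInter_of_directed_nonempty_isCompact_isClosed hdir
      · exact fun U hU => (hcC hU).1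
      · exact fun U hU => (hcC hU).2.1.isCompact
      · exact fun U hU => (hcC hU).2.1
    refine ⟨⋂₀ c, ⟨hne, isClosed_sInter fun U hU => (hcC hU).2.1, ?_⟩,
      fun s hs => Set.sInter_subset_of_mem hs⟩
    intro u m hm
    exact Set.mem_sInter.mpr fun U hU => (hcC hU).2.2 u m (Set.mem_sInter.mp hm U hU)
  obtain ⟨M, -, hM⟩ := zorn_superset_nonempty C hchain Set.univ
    ⟨Set.univ_nonempty, isClosed_univ, fun _ _ _ => trivial⟩
  -- any range `δS * m` for `m` in a left ideal is a closed left ideal inside it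
  have hRange : ∀ L : Set (Delta P), (∀ u : Delta P, ∀ m ∈ L, star u m ∈ L) → ∀ m ∈ L,
      (Set.range fun u => star u m) ∈ C ∧ (Set.range fun u => star u m) ⊆ L := by
    intro L hL m hm
    refine ⟨⟨Set.range_nonempty _, (isCompact_range (contR m)).isClosed, ?_⟩, ?_⟩
    · rintro u _ ⟨u', rfl⟩
      exact ⟨star u u', star_assoc' hstar u u' m⟩
    · rintro _ ⟨u', rfl⟩
      exact hL u' m hm
  -- M is a strongly minimal left ideal
  have hMminL : MinL star M := by
    refine ⟨hM.prop.1, hM.prop.2.2, fun m hm => ?_⟩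
    obtain ⟨h1, h2⟩ := hRange M hM.prop.2.2 m hm
    exact hM.2 h1 h2
  -- right translates of strongly minimal left ideals are strongly minimal
  have hMinL_star : ∀ L, MinL star L → ∀ v : Delta P, MinL star ((fun m => star m v) '' L) := by
    intro L hL v
    refine ⟨hL.1.image _, ?_, ?_⟩
    · rintro u _ ⟨m, hm, rfl⟩
      exact ⟨star u m, hL.2.1 u m hm, star_assoc' hstar u m v⟩
    · rintro _ ⟨m, hm, rfl⟩ _ ⟨m', hm', rfl⟩
      obtain ⟨u, hu⟩ := hL.2.2 m hm hm'
      refine ⟨u, ?_⟩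
      have hu' : star u m = m' := hu
      show star u (star m v) = star m' v
      rw [← star_assoc' hstar u m v, hu']
  -- the union of strongly minimal left ideals is a two-sided ideal
  have hUideal : P.IsIdeal star {p : Delta P | ∃ L, MinL star L ∧ p ∈ L} := by
    constructor
    · obtain ⟨m, hm⟩ := hMminL.1
      exact ⟨m, M, hMminL, hm⟩
    · rintro p ⟨L, hL, hpL⟩ v
      exact ⟨⟨(fun m => star m v) '' L, hMinL_star L hL v, ⟨p, hpL, rfl⟩⟩,
        ⟨L, hL, hL.2.1 v p hpL⟩⟩
  have hqU : q ∈ {p : Delta P | ∃ L, MinL star L ∧ p ∈ L} := hK.2 _ hUideal hqK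
  obtain ⟨L, hL, hqL⟩ := hqU
  have h1 : star w q ∈ L := hL.2.1 w q hqL
  obtain ⟨u, hu⟩ := hL.2.2 (star w q) h1 hqL
  exact ⟨u, hu.symm⟩

end StmtTenAux

open PartialSemigroup in
/-- If `A ⊆ S` is piecewise syndetic, there is a finite nonempty `H ⊆ S` such that
for every finite nonempty `T ⊆ σ(H)` there is `x ∈ σ(T)` with
`T*x ⊆ ⋃_{t ∈ H} t⁻¹A`. -/
theorem stmt10 {S : Type*} (P : PartialSemigroup S) (hP : P.Adequate)
    (star : {q : Ultrafilter S // P.mem_delta q} → {q : Ultrafilter S // P.mem_delta q} →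
      {q : Ultrafilter S // P.mem_delta q})
    (hstar : ∀ p q (A : Set S),
      A ∈ (star p q).1 ↔ {a : S | P.invImg a A ∈ q.1} ∈ p.1)
    (K : Set {q : Ultrafilter S // P.mem_delta q}) (hK : P.IsSmallestIdeal star K)
    (A : Set S) (hA : ∃ q ∈ K, A ∈ q.1) :
    ∃ H : Finset S, H.Nonempty ∧
      ∀ T : Finset S, T.Nonempty → ↑T ⊆ P.sigma ↑H →
        ∃ x ∈ P.sigma ↑T, ∀ t ∈ T,
          ∃ v, P.mul t x = some v ∧ v ∈ ⋃ s ∈ H, P.invImg s A := by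
  classical
  obtain ⟨q, hqK, hAq⟩ := hA
  haveI : Nonempty S := Filter.nonempty_of_neBot (q.1 : Filter S)
  set B : Set S := {s | P.invImg s A ∈ q.1} with hBdef
  -- B is syndetic
  have hBsynd : P.Syndetic B := by
    by_contra hsyn
    have hnot : ∀ H : Finset S, H.Nonempty → ∃ x ∈ P.sigma ↑H, x ∉ ⋃ t ∈ H, P.invImg t B := by
      intro H hH
      by_contra hx
      push_neg at hx
      exact hsyn ⟨H, hH, fun y hy => hx y hy⟩
    set fam : Set (Set S) := Set.range P.phi ∪ Set.range (fun s => (P.invImg s B)ᶜ) with hfam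
    have hgen : (Filter.generate fam).NeBot := by
      rw [Filter.generate_neBot_iff]
      intro t hts htfin
      rcases t.eq_empty_or_nonempty with rfl | htne
      · simpa using Set.univ_nonempty
      · have hgsel : ∀ u ∈ t, ∃ s : S, u = P.phi s ∨ u = (P.invImg s B)ᶜ := by
          intro u hu
          rcases hts hu with ⟨s, rfl⟩ | ⟨s, rfl⟩
          exacts [⟨s, Or.inl rfl⟩, ⟨s, Or.inr rfl⟩]
        choose! g hg using hgsel
        have hHfin : (g '' t).Finite := htfin.image g
        have hHne : hHfin.toFinset.Nonempty := by
          obtain ⟨u, hu⟩ := htne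
          exact ⟨g u, hHfin.mem_toFinset.mpr ⟨u, hu, rfl⟩⟩
        obtain ⟨x, hxσ, hxU⟩ := hnot hHfin.toFinset hHne
        refine ⟨x, Set.mem_sInter.mpr ?_⟩
        intro u hu
        have hgu : g u ∈ hHfin.toFinset := hHfin.mem_toFinset.mpr ⟨u, hu, rfl⟩
        rcases hg u hu with h | h
        · rw [h]
          exact Set.mem_iInter₂.mp hxσ (g u) (Finset.mem_coe.mpr hgu)
        · rw [h]
          intro hmem
          exact hxU (Set.mem_iUnion₂.mpr ⟨g u, hgu, hmem⟩)
    haveI := hgen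
    obtain ⟨w', hw'le⟩ := Ultrafilter.exists_le (Filter.generate fam)
    have hwδ : P.mem_delta w' := fun x =>
      hw'le (Filter.mem_generate_of_mem (Or.inl ⟨x, rfl⟩))
    obtain ⟨u, hu⟩ := exists_repro hstar K hK q hqK ⟨w', hwδ⟩
    have h1 : {a | P.invImg a A ∈ (star ⟨w', hwδ⟩ q).1} ∈ u.1 := (hstar u _ A).mp (hu ▸ hAq)
    obtain ⟨a, ha⟩ := Ultrafilter.nonempty_of_mem h1
    have h2 : {b | P.invImg b (P.invImg a A) ∈ q.1} ∈ w' :=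
      (hstar ⟨w', hwδ⟩ q (P.invImg a A)).mp ha
    have h3 : P.phi a ∈ w' := hwδ a
    have h4 : P.invImg a B ∈ w' := by
      refine Filter.mem_of_superset (Filter.inter_mem h2 h3) ?_
      rintro b ⟨hb1, hb2⟩
      obtain ⟨v, hv⟩ := Option.isSome_iff_exists.mp hb2
      refine ⟨v, hv, ?_⟩
      show P.invImg v A ∈ q.1
      rw [← invImg_invImg' P hv A]
      exact hb1
    have h5 : (P.invImg a B)ᶜ ∈ w' :=
      hw'le (Filter.mem_generate_of_mem (Or.inr ⟨a, rfl⟩))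
    exact (Ultrafilter.compl_mem_iff_notMem.mp h5) h4
  -- assemble the conclusion
  obtain ⟨H, hHne, hHsub⟩ := hBsynd
  refine ⟨H, hHne, ?_⟩
  intro T hTne hTsub
  have hmem : ∀ t ∈ T,
      (P.phi t ∩ {x | ∃ v, P.mul t x = some v ∧ v ∈ ⋃ s ∈ H, P.invImg s A}) ∈ q.1 := by
    intro t ht
    have htU : t ∈ ⋃ h ∈ H, P.invImg h B := hHsub (hTsub (Finset.mem_coe.mpr ht))
    rw [Set.mem_iUnion₂] at htU
    obtain ⟨h, hh, v, hv, hvB⟩ := htU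
    have hvq : P.invImg v A ∈ q.1 := hvB
    refine Filter.mem_of_superset hvq ?_
    rintro y ⟨z, hz, hzA⟩
    have hassoc := P.assoc h t y
    rw [hv] at hassoc
    simp only [Option.bind_some] at hassoc
    rw [hz] at hassoc
    cases hty : P.mul t y with
    | none => rw [hty] at hassoc; simp at hassoc
    | some s0 =>
      rw [hty] at hassoc
      simp only [Option.bind_some] at hassoc
      refine ⟨?_, s0, hty, ?_⟩
      · show (P.mul t y).isSome
        rw [hty]; rfl
      · exact Set.mem_iUnion₂.mpr ⟨h, hh, z, hassoc.symm, hzA⟩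
  have hX : (⋂ t ∈ T, (P.phi t ∩
      {x | ∃ v, P.mul t x = some v ∧ v ∈ ⋃ s ∈ H, P.invImg s A})) ∈ q.1 :=
    (Filter.biInter_finset_mem T).mpr hmem
  obtain ⟨x, hx⟩ := Ultrafilter.nonempty_of_mem hX
  have hx' := Set.mem_iInter₂.mp hx
  refine ⟨x, ?_, fun t ht => (hx' t ht).2⟩
  show x ∈ ⋂ s ∈ (↑T : Set S), P.phi s
  exact Set.mem_iInter₂.mpr fun s hs => (hx' s (Finset.mem_coe.mp hs)).1
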